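/- The two minimization problems agree: m_ω = m̃_ω, where m_ω = inf{ S_ω(u) : u ∈ H¹(ℝᵈ)\{0}, K(u) = 0 } and m̃_ω = inf{ I_ω(u) : u ∈ H¹(ℝᵈ)\{0}, K(u) ≤ 0 }. -/

import Mathlib

open MeasureTheory Filter Asymptotics Real Topology

noncomputable section

abbrev Ed (d : ℕ) : Type := EuclideanSpace ℝ (Fin d)

/-- squared L² norm -/
def l2sq (d : ℕ) (u : Ed d → ℝ) : ℝ := ∫ x : Ed d, (u x) ^ 2

/-- squared L² norm of the gradient -/
def gradsq (d : ℕ) (u : Ed d → ℝ) : ℝ := ∫ x : Ed d, ‖fderiv ℝ u x‖ ^ 2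

/-- ∫ |u|^q -/
def lpInt (d : ℕ) (q : ℝ) (u : Ed d → ℝ) : ℝ := ∫ x : Ed d, |u x| ^ q

/-- critical Sobolev exponent 2* = 2d/(d-2) -/
def twoStar (d : ℕ) : ℝ := 2 * (d : ℝ) / ((d : ℝ) - 2)

/-- membership in H¹(ℝᵈ) -/
def H1 (d : ℕ) (u : Ed d → ℝ) : Prop :=
  MemLp u 2 (volume : Measure (Ed d)) ∧ Differentiable ℝ u ∧
    MemLp (fun x => ‖fderiv ℝ u x‖) 2 (volume : Measure (Ed d))

/-- L²-scaling operator (T_λ u)(x) = λ^{d/2} u(λ x) -/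
def Tscal (d : ℕ) (lam : ℝ) (u : Ed d → ℝ) : Ed d → ℝ :=
  fun x => lam ^ ((d : ℝ) / 2) * u (lam • x)

/-- the action S_ω -/
def Sfun (d : ℕ) (ω μ p : ℝ) (u : Ed d → ℝ) : ℝ :=
  ω * l2sq d u + gradsq d u - (2 * μ / (p + 1)) * lpInt d (p + 1) u
    - (((d : ℝ) - 2) / (d : ℝ)) * lpInt d (twoStar d) u

/-- the functional K -/
def Kfun (d : ℕ) (μ p : ℝ) (u : Ed d → ℝ) : ℝ :=
  2 * gradsq d u - μ * ((d : ℝ) * (p - 1) / (p + 1)) * lpInt d (p + 1) u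
    - 2 * lpInt d (twoStar d) u

/-- the functional I_ω -/
def Ifun (d : ℕ) (ω p : ℝ) (u : Ed d → ℝ) : ℝ :=
  ω * l2sq d u + (((d : ℝ) * (p - 1) - 4) / ((d : ℝ) * (p - 1))) * gradsq d u
    + ((4 - ((d : ℝ) - 2) * (p - 1)) / ((d : ℝ) * (p - 1))) * lpInt d (twoStar d) u

/-- admissible class: nonzero H¹ functions (lying also in L^{p+1} and L^{2*}) -/
def adm (d : ℕ) (p : ℝ) (u : Ed d → ℝ) : Prop :=
  H1 d u ∧ ¬ (u =ᵐ[(volume : Measure (Ed d))] 0) ∧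
    MemLp u (ENNReal.ofReal (p + 1)) (volume : Measure (Ed d)) ∧
    MemLp u (ENNReal.ofReal (twoStar d)) (volume : Measure (Ed d))

/-- the variational value m_ω -/
def mOmega (d : ℕ) (ω μ p : ℝ) : ℝ :=
  sInf {y | ∃ u : Ed d → ℝ, adm d p u ∧ Kfun d μ p u = 0 ∧ y = Sfun d ω μ p u}

/-- the variational value m̃_ω -/
def mTilde (d : ℕ) (ω μ p : ℝ) : ℝ :=
  sInf {y | ∃ u : Ed d → ℝ, adm d p u ∧ Kfun d μ p u ≤ 0 ∧ y = Ifun d ω p u}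

/-- best Sobolev constant σ -/
def sobolev (d : ℕ) : ℝ :=
  sInf {y | ∃ u : Ed d → ℝ, Differentiable ℝ u ∧ lpInt d (twoStar d) u = 1 ∧ y = gradsq d u}

/-- Laplacian -/
def lap (d : ℕ) (u : Ed d → ℝ) (x : Ed d) : ℝ :=
  ∑ i : Fin d, fderiv ℝ (fun y => fderiv ℝ u y (EuclideanSpace.single i 1)) x
    (EuclideanSpace.single i 1)

/-!
On `{K = 0}` we have `S_ω = I_ω`, since `S_ω = I_ω + 2 / (d (p - 1)) K`. Conversely, if `K(u) ≤ 0`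
then `K(T_t u) = t² (2 ‖∇u‖² - c t^α ‖u‖_{p+1}^{p+1} - 2 t^β ‖u‖_{2*}^{2*})` with `α, β > 0`; the
bracket is `2 ‖∇u‖² > 0` at `t = 0` and `K(u) ≤ 0` at `t = 1`, so it vanishes at some `t ∈ (0, 1]`,
and there `I_ω(T_t u) ≤ I_ω(u)` because all terms of `I_ω` scale with nonnegative powers of `t`.
So each of the two sets of values has an element below any given element of the other, and their
infima agree, also when a set is unbounded below or empty (where `sInf` is the junk value `0`).
-/

theorem exists_mem_Ioc_sub_mul_rpow_sub_mul_rpow_eq_zero {A B C α β : ℝ} (hA : 0 < A)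
    (hα : 0 < α) (hβ : 0 < β) (h1 : A - B - C ≤ 0) :
    ∃ t ∈ Set.Ioc (0 : ℝ) 1, A - B * t ^ α - C * t ^ β = 0 := by
  set g : ℝ → ℝ := fun t => A - B * t ^ α - C * t ^ β
  have hg : Continuous g := by
    have := Real.continuous_rpow_const hα.le
    have := Real.continuous_rpow_const hβ.le
    fun_prop
  have hg0 : g 0 = A := by simp [g, Real.zero_rpow hα.ne', Real.zero_rpow hβ.ne']
  have hg1 : g 1 = A - B - C := by simp [g]
  obtain ⟨t, ⟨ht0, ht1⟩, hgt⟩ := intermediate_value_Icc' zero_le_one hg.continuousOn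
    (show (0 : ℝ) ∈ Set.Icc (g 1) (g 0) from ⟨hg1 ▸ h1, hg0 ▸ hA.le⟩)
  refine ⟨t, ⟨ht0.lt_of_ne ?_, ht1⟩, hgt⟩
  rintro rfl
  exact hA.ne' (hg0 ▸ hgt)

section HaarMeasure

variable {E F : Type*} [NormedAddCommGroup E] [NormedSpace ℝ E] [FiniteDimensional ℝ E]
  [MeasurableSpace E] [BorelSpace E] (μ : Measure E) [μ.IsAddHaarMeasure]

theorem MeasureTheory.MemLp.comp_smul [NormedAddCommGroup F] {f : E → F} {q : ENNReal}
    (hf : MemLp f q μ) {r : ℝ} (hr : r ≠ 0) : MemLp (fun x => f (r • x)) q μ := by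
  have : MemLp f q (Measure.map (r • ·) μ) := by
    rw [Measure.map_addHaar_smul μ hr]
    exact hf.smul_measure ENNReal.ofReal_ne_top
  exact this.comp_of_map (measurable_const_smul r).aemeasurable

variable [NormedAddCommGroup F] [NormedSpace ℝ F] [CompleteSpace F] {f : E → F}

/-- By Fubini, for a.e. `x` the derivative vanishes a.e. along the line `x + ℝ • v`; the
fundamental theorem of calculus on that line gives `f (x + v) = f x`. -/
theorem ae_add_eq_of_ae_fderiv_eq_zero (hf : Differentiable ℝ f)
    (hf' : ∀ᵐ x ∂μ, fderiv ℝ f x = 0) (v : E) : ∀ᵐ x ∂μ, f (x + v) = f x := by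
  have hline : ∀ᵐ x ∂μ, ∀ᵐ t : ℝ, fderiv ℝ f (x + t • v) v = 0 := by
    borelize F
    refine (Measure.ae_ae_comm ?_).2 (ae_of_all _ fun t => ?_)
    · exact ((measurable_fderiv_apply_const ℝ f v).comp (by fun_prop))
        (measurableSet_singleton 0)
    · exact (measurePreserving_add_right μ (t • v)).quasiMeasurePreserving.ae
        (p := fun y => fderiv ℝ f y v = 0) (hf'.mono fun x hx => by simp [hx])
  filter_upwards [hline] with x hx
  have hderiv : ∀ t : ℝ, HasDerivAt (fun t : ℝ => f (x + t • v)) (fderiv ℝ f (x + t • v) v) t :=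
    fun t => (hf _).hasFDerivAt.comp_hasDerivAt t
      (by simpa using ((hasDerivAt_id t).smul_const v).const_add x)
  have hint : IntervalIntegrable (fun t : ℝ => fderiv ℝ f (x + t • v) v) volume 0 1 :=
    ((integrable_zero ℝ F volume).congr (EventuallyEq.symm hx)).intervalIntegrable
  have hFTC := intervalIntegral.integral_eq_sub_of_hasDerivAt (fun t _ => hderiv t) hint
  rw [intervalIntegral.integral_congr_ae (hx.mono fun t ht _ => ht)] at hFTC
  simpa [sub_eq_zero, eq_comm] using hFTC

theorem is_const_of_ae_fderiv_eq_zero (hf : Differentiable ℝ f)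
    (hf' : ∀ᵐ x ∂μ, fderiv ℝ f x = 0) (x y : E) : f x = f y := by
  have hshift (v : E) : (fun x => f (x + v)) = f :=
    ((hf.continuous.comp (continuous_add_const v)).ae_eq_iff_eq μ hf.continuous).1
      (ae_add_eq_of_ae_fderiv_eq_zero μ hf hf' v)
  simpa using congrFun (hshift (x - y)) y

end HaarMeasure

section Scaling

variable {d : ℕ} {u : Ed d → ℝ} {t : ℝ}

theorem integral_comp_smul_of_pos (f : Ed d → ℝ) (ht : 0 < t) :
    ∫ x, f (t • x) = (t ^ d)⁻¹ * ∫ x, f x := by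
  rw [Measure.integral_comp_smul_of_nonneg volume f t (hR := ht.le), finrank_euclideanSpace_fin,
    smul_eq_mul]

theorem rpow_natCast_div_two_sq (d : ℕ) (ht : 0 < t) : (t ^ ((d : ℝ) / 2)) ^ 2 = t ^ d := by
  rw [← rpow_natCast, ← rpow_natCast, ← rpow_mul ht.le]
  norm_num

theorem lpInt_Tscal (q : ℝ) (u : Ed d → ℝ) (ht : 0 < t) :
    lpInt d q (Tscal d t u) = t ^ ((d : ℝ) * q / 2 - d) * lpInt d q u := by
  have hpt (x : Ed d) : |Tscal d t u x| ^ q = t ^ ((d : ℝ) / 2 * q) * |u (t • x)| ^ q := by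
    rw [Tscal, abs_mul, abs_of_pos (rpow_pos_of_pos ht _),
      mul_rpow (rpow_pos_of_pos ht _).le (abs_nonneg _), ← rpow_mul ht.le]
  unfold lpInt
  simp_rw [hpt]
  rw [integral_const_mul, integral_comp_smul_of_pos (fun y => |u y| ^ q) ht, ← mul_assoc,
    ← rpow_natCast, ← rpow_neg ht.le, ← rpow_add ht]
  ring_nf

theorem l2sq_Tscal (u : Ed d → ℝ) (ht : 0 < t) : l2sq d (Tscal d t u) = l2sq d u := by
  have hpt (x : Ed d) : Tscal d t u x ^ 2 = t ^ d * u (t • x) ^ 2 := by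
    rw [Tscal, mul_pow, rpow_natCast_div_two_sq d ht]
  unfold l2sq
  simp_rw [hpt]
  rw [integral_const_mul, integral_comp_smul_of_pos (fun y => u y ^ 2) ht, ← mul_assoc,
    mul_inv_cancel₀ (pow_ne_zero _ ht.ne'), one_mul]

theorem Differentiable.Tscal (hu : Differentiable ℝ u) (t : ℝ) :
    Differentiable ℝ (Tscal d t u) :=
  (hu.comp (differentiable_id.const_smul t)).const_mul _

theorem fderiv_Tscal (hu : Differentiable ℝ u) (x : Ed d) :
    fderiv ℝ (Tscal d t u) x = (t ^ ((d : ℝ) / 2) * t) • fderiv ℝ u (t • x) := by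
  have hchain : HasFDerivAt (Tscal d t u)
      (t ^ ((d : ℝ) / 2) • (fderiv ℝ u (t • x)).comp (t • ContinuousLinearMap.id ℝ (Ed d))) x :=
    ((hu _).hasFDerivAt.comp x (t • ContinuousLinearMap.id ℝ (Ed d)).hasFDerivAt).const_mul _
  rw [hchain.fderiv]
  ext w
  simp [mul_smul]

theorem norm_fderiv_Tscal (hu : Differentiable ℝ u) (ht : 0 < t) (x : Ed d) :
    ‖fderiv ℝ (Tscal d t u) x‖ = t ^ ((d : ℝ) / 2) * t * ‖fderiv ℝ u (t • x)‖ := by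
  rw [fderiv_Tscal hu, norm_smul, Real.norm_of_nonneg (by positivity)]

theorem gradsq_Tscal (hu : Differentiable ℝ u) (ht : 0 < t) :
    gradsq d (Tscal d t u) = t ^ 2 * gradsq d u := by
  have hpt (x : Ed d) : ‖fderiv ℝ (Tscal d t u) x‖ ^ 2
      = t ^ d * t ^ 2 * ‖fderiv ℝ u (t • x)‖ ^ 2 := by
    rw [norm_fderiv_Tscal hu ht, mul_pow, mul_pow, rpow_natCast_div_two_sq d ht]
  unfold gradsq
  simp_rw [hpt]
  rw [integral_const_mul, integral_comp_smul_of_pos (fun y => ‖fderiv ℝ u y‖ ^ 2) ht,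
    ← mul_assoc]
  field_simp

theorem MeasureTheory.MemLp.Tscal {q : ENNReal} (hu : MemLp u q volume) (ht : t ≠ 0) :
    MemLp (Tscal d t u) q volume :=
  (hu.comp_smul volume ht).const_mul _

theorem ae_eq_zero_of_Tscal_ae_eq_zero (ht : 0 < t) (h : Tscal d t u =ᵐ[volume] 0) :
    u =ᵐ[volume] 0 := by
  filter_upwards [(Measure.quasiMeasurePreserving_smul volume (inv_ne_zero ht.ne')).ae h]
    with x hx
  simpa [Tscal, smul_inv_smul₀ ht.ne', (rpow_pos_of_pos ht _).ne'] using hx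

theorem adm_Tscal {p : ℝ} (hu : adm d p u) (ht : 0 < t) : adm d p (Tscal d t u) := by
  obtain ⟨⟨hL2, hdiff, hgrad⟩, hne, hLp, hL2star⟩ := hu
  refine ⟨⟨hL2.Tscal ht.ne', hdiff.Tscal t, ?_⟩,
    fun h => hne (ae_eq_zero_of_Tscal_ae_eq_zero ht h), hLp.Tscal ht.ne', hL2star.Tscal ht.ne'⟩
  simp_rw [norm_fderiv_Tscal hdiff ht]
  exact (hgrad.comp_smul volume ht.ne').const_mul _

end Scaling

section Functionals

variable {d : ℕ} {ω μ p t : ℝ} {u : Ed d → ℝ}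

theorem lpInt_nonneg (d : ℕ) (q : ℝ) (u : Ed d → ℝ) : 0 ≤ lpInt d q u :=
  integral_nonneg fun _ => rpow_nonneg (abs_nonneg _) _

theorem gradsq_nonneg (d : ℕ) (u : Ed d → ℝ) : 0 ≤ gradsq d u :=
  integral_nonneg fun _ => sq_nonneg _

theorem Sfun_eq_Ifun_add_Kfun (hd : d ≠ 0) (hp : p ≠ 1) (u : Ed d → ℝ) :
    Sfun d ω μ p u = Ifun d ω p u + 2 / ((d : ℝ) * (p - 1)) * Kfun d μ p u := by
  have hd' : (d : ℝ) ≠ 0 := Nat.cast_ne_zero.2 hd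
  have hp' : p - 1 ≠ 0 := sub_ne_zero.2 hp
  unfold Sfun Ifun Kfun
  field_simp
  ring

theorem two_lt_twoStar (hd : 2 < d) : 2 < twoStar d := by
  have hd' : (2 : ℝ) < d := by exact_mod_cast hd
  rw [twoStar, lt_div_iff₀ (by linarith)]
  linarith

theorem mul_twoStar_div_two_sub_self (hd : d ≠ 2) : (d : ℝ) * twoStar d / 2 - d = twoStar d := by
  have hd' : (d : ℝ) - 2 ≠ 0 := sub_ne_zero.2 (by exact_mod_cast hd)
  unfold twoStar
  field_simp
  ring

theorem gradsq_pos (hd : 0 < d) (hu : H1 d u) (hne : ¬ u =ᵐ[volume] 0) : 0 < gradsq d u := by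
  obtain ⟨hL2, hdiff, hgrad⟩ := hu
  refine (gradsq_nonneg d u).lt_of_ne' fun h0 => hne ?_
  have hsq : (fun x => ‖fderiv ℝ u x‖ ^ 2) =ᵐ[volume] 0 :=
    (integral_eq_zero_iff_of_nonneg (fun _ => sq_nonneg _)
      ((memLp_two_iff_integrable_sq hgrad.aestronglyMeasurable).1 hgrad)).1 h0
  have hconst : u = fun _ => u 0 :=
    funext fun x => is_const_of_ae_fderiv_eq_zero volume hdiff
      (hsq.mono fun x hx => by simpa using hx) x 0
  have : NeZero d := ⟨hd.ne'⟩
  rw [hconst] at hL2 ⊢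
  rcases (memLp_const_iff two_ne_zero ENNReal.ofNat_ne_top).1 hL2 with h | h
  · simp only [h]
    rfl
  · simp at h

theorem Kfun_Tscal (hd : d ≠ 2) (hu : Differentiable ℝ u) (ht : 0 < t) :
    Kfun d μ p (Tscal d t u) = t ^ 2 * (2 * gradsq d u
      - μ * ((d : ℝ) * (p - 1) / (p + 1)) * lpInt d (p + 1) u * t ^ ((d : ℝ) * (p - 1) / 2 - 2)
      - 2 * lpInt d (twoStar d) u * t ^ (twoStar d - 2)) := by
  rw [Kfun, gradsq_Tscal hu ht, lpInt_Tscal _ _ ht, lpInt_Tscal _ _ ht,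
    mul_twoStar_div_two_sub_self hd, show (d : ℝ) * (p + 1) / 2 - d = d * (p - 1) / 2 by ring,
    rpow_sub ht, rpow_sub ht, rpow_two]
  field_simp

theorem four_lt_mul_sub_one (hd : 0 < d) (hp1 : 1 + 4 / (d : ℝ) < p) : 4 < (d : ℝ) * (p - 1) := by
  have hd' : (0 : ℝ) < d := by exact_mod_cast hd
  have := (div_lt_iff₀ hd').1 (show 4 / (d : ℝ) < p - 1 by linarith)
  linarith

theorem sub_two_mul_sub_one_lt_four (hd : 2 < d) (hp2 : p < twoStar d - 1) :
    ((d : ℝ) - 2) * (p - 1) < 4 := by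
  have hd2 : (0 : ℝ) < d - 2 := by
    have : (2 : ℝ) < d := by exact_mod_cast hd
    linarith
  have h2 : twoStar d - 2 = 4 / ((d : ℝ) - 2) := by
    rw [twoStar]
    field_simp
    ring
  exact (lt_div_iff₀' hd2).1 (by linarith)

theorem Ifun_Tscal_le (hd : 2 < d) (hp1 : 1 + 4 / (d : ℝ) < p) (hp2 : p < twoStar d - 1)
    (hu : Differentiable ℝ u) (ht0 : 0 < t) (ht1 : t ≤ 1) :
    Ifun d ω p (Tscal d t u) ≤ Ifun d ω p u := by
  have hdp := four_lt_mul_sub_one (by omega) hp1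
  have hdp2 := sub_two_mul_sub_one_lt_four hd hp2
  rw [Ifun, Ifun, l2sq_Tscal u ht0, gradsq_Tscal hu ht0, lpInt_Tscal _ _ ht0,
    mul_twoStar_div_two_sub_self (by omega)]
  have hgrad := mul_le_of_le_one_left (gradsq_nonneg d u) (pow_le_one₀ (n := 2) ht0.le ht1)
  have hcrit := mul_le_of_le_one_left (lpInt_nonneg d (twoStar d) u)
    (rpow_le_one ht0.le ht1 (zero_lt_two.trans (two_lt_twoStar hd)).le)
  have hc1 : 0 ≤ ((d : ℝ) * (p - 1) - 4) / ((d : ℝ) * (p - 1)) := by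
    apply div_nonneg <;> linarith
  have hc2 : 0 ≤ (4 - ((d : ℝ) - 2) * (p - 1)) / ((d : ℝ) * (p - 1)) := by
    apply div_nonneg <;> linarith
  linarith [mul_le_mul_of_nonneg_left hgrad hc1, mul_le_mul_of_nonneg_left hcrit hc2]

theorem exists_Tscal_Kfun_eq_zero (hd : 2 < d) (hp1 : 1 + 4 / (d : ℝ) < p) (hu : adm d p u)
    (hK : Kfun d μ p u ≤ 0) : ∃ t ∈ Set.Ioc (0 : ℝ) 1, Kfun d μ p (Tscal d t u) = 0 := by
  have hα : 0 < (d : ℝ) * (p - 1) / 2 - 2 := by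
    linarith [four_lt_mul_sub_one (by omega) hp1]
  obtain ⟨t, ht, hroot⟩ := exists_mem_Ioc_sub_mul_rpow_sub_mul_rpow_eq_zero
    (B := μ * ((d : ℝ) * (p - 1) / (p + 1)) * lpInt d (p + 1) u)
    (C := 2 * lpInt d (twoStar d) u)
    (mul_pos two_pos (gradsq_pos (by omega) hu.1 hu.2.1)) hα
    (sub_pos.2 (two_lt_twoStar hd)) hK
  exact ⟨t, ht, by rw [Kfun_Tscal (by omega) hu.1.2.1 ht.1, hroot, mul_zero]⟩

end Functionals

theorem stmt6_general (d : ℕ) (hd : 3 ≤ d) (ω μ p : ℝ)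
    (hp1 : 1 + 4 / (d : ℝ) < p) (hp2 : p < twoStar d - 1) :
    mOmega d ω μ p = mTilde d ω μ p := by
  have hp : p ≠ 1 := by
    rintro rfl
    linarith [four_lt_mul_sub_one (by omega) hp1]
  have hSI {u : Ed d → ℝ} (hK : Kfun d μ p u = 0) : Sfun d ω μ p u = Ifun d ω p u := by
    rw [Sfun_eq_Ifun_add_Kfun (by omega) hp, hK, mul_zero, add_zero]
  refine csInf_eq_csInf_of_forall_exists_le ?_ ?_
  · rintro _ ⟨u, hu, hK, rfl⟩
    exact ⟨_, ⟨u, hu, hK.le, rfl⟩, (hSI hK).ge⟩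
  · rintro _ ⟨u, hu, hK, rfl⟩
    obtain ⟨t, ⟨ht0, ht1⟩, hKt⟩ := exists_Tscal_Kfun_eq_zero hd hp1 hu hK
    exact ⟨_, ⟨Tscal d t u, adm_Tscal hu ht0, hKt, rfl⟩,
      (hSI hKt).trans_le (Ifun_Tscal_le hd hp1 hp2 hu.1.2.1 ht0 ht1)⟩

/-- the two minimization problems agree: m_ω = m̃_ω. -/
theorem stmt6 (d : ℕ) (hd : 3 ≤ d) (ω μ p : ℝ) (hω : 0 < ω) (hμ : 0 < μ)
    (hp1 : 1 + 4 / (d : ℝ) < p) (hp2 : p < twoStar d - 1) :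
    mOmega d ω μ p = mTilde d ω μ p :=
  stmt6_general d hd ω μ p hp1 hp2
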